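/- arXiv:2209.12967 — 5 statements merged into one kernel-verified Lean document; each statement's English description precedes it below -/
import Mathlib

section
/- Consider a two-player random game where player A's payoffs U^A(a,b) for (a,b) in [K^A]×[K^B] are i.i.d. uniform on [0,1], and independently for each action profile, with probability p one sets U^B(a,b) = U^A(a,b) and with probability 1-p draws U^B(a,b) as an independent uniform on [0,1]. Then the probability that the action profile (1,1) is a pure Nash equilibrium equals p/(K^A + K^B - 1) + (1-p)/(K^A K^B). -/
/-!
Condition on the payoffs at the profile `(0, 0)`. Given them, the other payoffs of A in column `0`
and of B in row `0` are independent uniforms (those of B as coin mixtures of two uniforms), so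
`(0, 0)` is an equilibrium with probability `∫ x ^ (K^A - 1) * y ^ (K^B - 1)`, where `x`, `y` are the
payoffs of A and B at `(0, 0)`. With probability `p` the coin there makes `y = x`, and the integral
is `1 / (K^A + K^B - 1)`; otherwise `x` and `y` are independent uniforms and it is `1 / (K^A K^B)`.
-/

open MeasureTheory ProbabilityTheory Set

local notation "𝕌" => (volume.restrict (Icc (0 : ℝ) 1) : Measure ℝ)

namespace ProbabilityTheory

variable {Ω : Type*} {mΩ : MeasurableSpace Ω} {P : Measure Ω}

lemma iIndepFun.curry {ι : Type*} {κ : ι → Type*} {𝓧 : (i : ι) → κ i → Type*}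
    {m𝓧 : ∀ i j, MeasurableSpace (𝓧 i j)} {X : (i : ι) → (j : κ i) → Ω → 𝓧 i j}
    (mX : ∀ i j, Measurable (X i j))
    (h : iIndepFun (fun (q : (i : ι) × κ i) ω ↦ X q.1 q.2 ω) P) :
    iIndepFun (fun i ω j ↦ X i j ω) P := by
  have := h.isProbabilityMeasure
  have : ∀ i j, IsProbabilityMeasure (P.map (X i j)) :=
    fun i j ↦ Measure.isProbabilityMeasure_map (mX i j).aemeasurable
  have hrow (i : ι) :
      P.map (fun ω j ↦ X i j ω) = Measure.infinitePi fun j ↦ P.map (X i j) :=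
    (iIndepFun_iff_map_fun_eq_infinitePi_map (mX i)).1
      (h.precomp (g := Sigma.mk i) sigma_mk_injective)
  have hcurry : (fun ω i j ↦ X i j ω) = MeasurableEquiv.piCurry 𝓧 ∘ fun ω q ↦ X q.1 q.2 ω := rfl
  rw [iIndepFun_iff_map_fun_eq_infinitePi_map (fun i ↦ measurable_pi_lambda _ (mX i)), hcurry,
    ← Measure.map_map (by fun_prop) (by fun_prop),
    (iIndepFun_iff_map_fun_eq_infinitePi_map (fun q ↦ mX q.1 q.2)).1 h]
  simp_rw [hrow]
  exact Measure.infinitePi_map_piCurry fun i j ↦ P.map (X i j)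

lemma IndepFun.map_ite_eq {β γ : Type*} [MeasurableSpace β] [MeasurableSpace γ]
    [IsProbabilityMeasure P] {C : Ω → β} {U V : Ω → γ} {q : β → Prop} [DecidablePred q]
    (hq : MeasurableSet {x | q x}) (hC : Measurable C) (hU : Measurable U) (hV : Measurable V)
    (hCU : IndepFun C U P) (hCV : IndepFun C V P) (hUV : P.map U = P.map V) :
    P.map (fun ω ↦ if q (C ω) then U ω else V ω) = P.map U := by
  ext t ht
  have hW : Measurable fun ω ↦ if q (C ω) then U ω else V ω := Measurable.ite (hC hq) hU hV
  have hsplit : (fun ω ↦ if q (C ω) then U ω else V ω) ⁻¹' t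
      = (C ⁻¹' {x | q x} ∩ U ⁻¹' t) ∪ (C ⁻¹' {x | q x}ᶜ ∩ V ⁻¹' t) := by
    ext ω
    by_cases h : q (C ω) <;> simp [h]
  have hVU : P (V ⁻¹' t) = P (U ⁻¹' t) := by
    rw [← Measure.map_apply hV ht, ← Measure.map_apply hU ht, hUV]
  rw [Measure.map_apply hW ht, Measure.map_apply hU ht, hsplit,
    measure_union ((disjoint_compl_right.preimage C).mono inter_subset_left inter_subset_left)
      ((hC hq.compl).inter (hV ht)),
    hCU.measure_inter_preimage_eq_mul _ _ hq ht, hCV.measure_inter_preimage_eq_mul _ _ hq.compl ht,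
    hVU, ← add_mul, preimage_compl, prob_add_prob_compl (hC hq), one_mul]

lemma measure_forall_le_none_eq_lintegral {β A B : Type*} [MeasurableSpace β] [Fintype A]
    [Fintype B] {ν : Measure β} [IsProbabilityMeasure ν] {Z : Option (A ⊕ B) → Ω → β}
    (hZ : ∀ o, Measurable (Z o)) (hind : iIndepFun Z P) (hlaw : ∀ o, P.map (Z o) = ν)
    {φ ψ : β → ℝ} (hφ : Measurable φ) (hψ : Measurable ψ) :
    P {ω | (∀ a, φ (Z (some (.inl a)) ω) ≤ φ (Z none ω)) ∧
        ∀ b, ψ (Z (some (.inr b)) ω) ≤ ψ (Z none ω)}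
      = ∫⁻ v, ν.map φ (Iic (φ v)) ^ Fintype.card A * ν.map ψ (Iic (ψ v)) ^ Fintype.card B ∂ν := by
  set S : Set (Option (A ⊕ B) → β) := {w | (∀ a, φ (w (some (.inl a))) ≤ φ (w none)) ∧
    ∀ b, ψ (w (some (.inr b))) ≤ ψ (w none)}
  have hS : MeasurableSet S := by
    simp only [S, ofPred_and, ofPred_forall]
    exact .inter (.iInter fun a ↦ measurableSet_le (by fun_prop) (by fun_prop))
      (.iInter fun b ↦ measurableSet_le (by fun_prop) (by fun_prop))
  have hjoint : P.map (fun ω o ↦ Z o ω) = Measure.pi fun _ ↦ ν := by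
    rw [hind.map_fun_eq_pi_map fun o ↦ (hZ o).aemeasurable]
    simp_rw [hlaw]
  have hsection (v : β) :
      (fun w ↦ (w, v)) ⁻¹' ((MeasurableEquiv.piOptionEquivProd fun _ ↦ β).symm ⁻¹' S)
        = Set.pi univ (Sum.elim (fun _ ↦ φ ⁻¹' Iic (φ v)) fun _ ↦ ψ ⁻¹' Iic (ψ v)) := by
    ext w
    change ((∀ a, φ (w (.inl a)) ≤ φ v) ∧ ∀ b, ψ (w (.inr b)) ≤ ψ v) ↔ _
    simp [Sum.forall]
  change P ((fun ω o ↦ Z o ω) ⁻¹' S) = _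
  rw [← Measure.map_apply (by fun_prop) hS, hjoint, ← Measure.pi_map_piOptionEquivProd,
    Measure.map_apply (MeasurableEquiv.measurable _) hS,
    Measure.prod_apply_symm (MeasurableEquiv.measurable _ hS)]
  refine lintegral_congr fun v ↦ ?_
  simp only [hsection, Measure.pi_pi, Fintype.prod_sum_type, Sum.elim_inl, Sum.elim_inr,
    Finset.prod_const, Finset.card_univ, Measure.map_apply hφ measurableSet_Iic,
    Measure.map_apply hψ measurableSet_Iic]

end ProbabilityTheory

lemma MeasureTheory.lintegral_fintype_prod_eq_prod {ι : Type*} [Fintype ι] {β : ι → Type*}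
    [∀ i, MeasurableSpace (β i)] (μ : ∀ i, Measure (β i)) [∀ i, IsProbabilityMeasure (μ i)]
    {g : ∀ i, β i → ENNReal} (hg : ∀ i, Measurable (g i)) :
    ∫⁻ x, ∏ i, g i (x i) ∂Measure.pi μ = ∏ i, ∫⁻ y, g i y ∂μ i := by
  rw [lintegral_prod_eq_prod_lintegral_of_indepFun _ _
    (iIndepFun_pi fun i ↦ (hg i).aemeasurable) fun i ↦ (hg i).comp (measurable_pi_apply i)]
  exact Finset.prod_congr rfl fun i _ ↦ (measurePreserving_eval μ i).lintegral_comp (hg i)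

instance isProbabilityMeasure_uniform : IsProbabilityMeasure 𝕌 := ⟨by simp⟩

lemma uniform_Iic {x : ℝ} (hx : x ∈ Icc (0 : ℝ) 1) : 𝕌 (Iic x) = ENNReal.ofReal x := by
  have : Iic x ∩ Icc 0 1 = Icc 0 x := by
    ext y; simp only [mem_inter_iff, mem_Iic, mem_Icc]; grind
  rw [Measure.restrict_apply measurableSet_Iic, this, Real.volume_Icc, sub_zero]

lemma uniform_Ioi {x : ℝ} (hx : x ∈ Icc (0 : ℝ) 1) : 𝕌 (Ioi x) = ENNReal.ofReal (1 - x) := by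
  rw [← compl_Iic, prob_compl_eq_one_sub measurableSet_Iic, uniform_Iic hx,
    ENNReal.ofReal_sub _ hx.1, ENNReal.ofReal_one]

lemma lintegral_uniform_Iic_pow (k : ℕ) :
    ∫⁻ x, 𝕌 (Iic x) ^ k ∂𝕌 = ENNReal.ofReal (1 / (k + 1)) := by
  rw [setLIntegral_congr_fun measurableSet_Icc fun x hx ↦ by
      rw [uniform_Iic hx, ← ENNReal.ofReal_pow hx.1],
    ← ofReal_integral_eq_lintegral_ofReal (continuous_pow k).integrableOn_Icc
      ((ae_restrict_iff' measurableSet_Icc).2 (.of_forall fun x hx ↦ pow_nonneg hx.1 k)),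
    integral_Icc_eq_integral_Ioc, ← intervalIntegral.integral_of_le zero_le_one, integral_pow]
  simp

/-- Payoff of B at a profile whose three underlying draws are `v`: A's payoff `v 0`, the coin
`v 1` and the fresh payoff `v 2`. -/
noncomputable def mixPayoff (p : ℝ) (v : Fin 3 → ℝ) : ℝ := if v 1 ≤ p then v 0 else v 2

lemma measurable_mixPayoff (p : ℝ) : Measurable (mixPayoff p) :=
  Measurable.ite (measurableSet_le (measurable_pi_apply 1) measurable_const)
    (measurable_pi_apply 0) (measurable_pi_apply 2)

lemma map_mixPayoff (p : ℝ) : (Measure.pi fun _ : Fin 3 ↦ 𝕌).map (mixPayoff p) = 𝕌 := by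
  have hind := iIndepFun_pi (μ := fun _ : Fin 3 ↦ 𝕌) (X := fun _ x ↦ x) fun _ ↦ aemeasurable_id
  have hlaw (k : Fin 3) : (Measure.pi fun _ : Fin 3 ↦ 𝕌).map (fun v ↦ v k) = 𝕌 :=
    (measurePreserving_eval _ k).map_eq
  exact (IndepFun.map_ite_eq (q := (· ≤ p)) measurableSet_Iic (measurable_pi_apply 1)
    (measurable_pi_apply 0) (measurable_pi_apply 2) (hind.indepFun (by decide))
    (hind.indepFun (by decide)) (by rw [hlaw, hlaw])).trans (hlaw 0)

lemma lintegral_mixPayoff (m n : ℕ) {p : ℝ} (hp : p ∈ Icc (0 : ℝ) 1) :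
    ∫⁻ v, 𝕌 (Iic (v 0)) ^ m * 𝕌 (Iic (mixPayoff p v)) ^ n ∂Measure.pi (fun _ : Fin 3 ↦ 𝕌)
      = ENNReal.ofReal (p / (m + n + 1) + (1 - p) / ((m + 1) * (n + 1))) := by
  set F : ℝ → ENNReal := fun x ↦ 𝕌 (Iic x)
  have hF : Measurable F := Monotone.measurable fun x y h ↦ measure_mono (Iic_subset_Iic.2 h)
  let g₁ : Fin 3 → ℝ → ENNReal := ![fun x ↦ F x ^ (m + n), (Iic p).indicator 1, 1]
  let g₂ : Fin 3 → ℝ → ENNReal := ![fun x ↦ F x ^ m, (Ioi p).indicator 1, fun x ↦ F x ^ n]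
  -- splitting on the coin `v 1` separates the variables
  have hsplit (v : Fin 3 → ℝ) :
      F (v 0) ^ m * F (mixPayoff p v) ^ n = ∏ k, g₁ k (v k) + ∏ k, g₂ k (v k) := by
    by_cases h : v 1 ≤ p
    · simp [mixPayoff, Fin.prod_univ_three, g₁, g₂, h, pow_add]
    · simp [mixPayoff, Fin.prod_univ_three, g₁, g₂, h, not_le.mp h]
  have hg₁ : ∀ k, Measurable (g₁ k) := by
    intro k; fin_cases k
    exacts [hF.pow_const _, measurable_one.indicator measurableSet_Iic, measurable_one]
  have hg₂ : ∀ k, Measurable (g₂ k) := by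
    intro k; fin_cases k
    exacts [hF.pow_const _, measurable_one.indicator measurableSet_Ioi, hF.pow_const _]
  rw [lintegral_congr hsplit, lintegral_add_left (by fun_prop),
    lintegral_fintype_prod_eq_prod _ hg₁, lintegral_fintype_prod_eq_prod _ hg₂]
  simp only [Fin.prod_univ_three, g₁, g₂, Matrix.cons_val_zero, Matrix.cons_val_one,
    Matrix.cons_val_two, Matrix.head_cons, Matrix.tail_cons, Pi.one_apply,
    lintegral_indicator_one measurableSet_Iic, lintegral_indicator_one measurableSet_Ioi,
    lintegral_one, measure_univ, mul_one, F, lintegral_uniform_Iic_pow, uniform_Iic hp,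
    uniform_Ioi hp]
  have hq : 0 ≤ 1 - p := sub_nonneg.2 hp.2
  rw [← ENNReal.ofReal_mul (by positivity), ← ENNReal.ofReal_mul (by positivity),
    ← ENNReal.ofReal_mul (mul_nonneg (by positivity) hq),
    ← ENNReal.ofReal_add (mul_nonneg (by positivity) hp.1)
      (mul_nonneg (mul_nonneg (by positivity) hq) (by positivity))]
  congr 1
  push_cast
  field_simp

/-- The profiles whose payoffs enter the equilibrium condition at `(0, 0)`. -/
def crossIndex {m n : ℕ} : Option (Fin m ⊕ Fin n) → Fin (m + 1) × Fin (n + 1)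
  | none => (0, 0)
  | some (.inl a) => (a.succ, 0)
  | some (.inr b) => (0, b.succ)

lemma crossIndex_injective {m n : ℕ} : Function.Injective (crossIndex (m := m) (n := n)) := by
  rintro (_ | a | b) (_ | a' | b') h <;> simp_all [crossIndex, Fin.succ_ne_zero, eq_comm]

/-- Correlated random game: player A's payoffs `UA` are i.i.d. uniform on `[0,1]`;
independently for each profile, with probability `p` one sets `UB = UA` and otherwise
`UB` is a fresh independent uniform (realized here via i.i.d. uniform coins `C` and
fresh uniforms `V`). Then the probability that the profile `(1,1)` is a pure Nash
equilibrium equals `p/(KA + KB - 1) + (1-p)/(KA·KB)`. -/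
theorem prob_profile_is_PNE
    {Ω : Type*} [MeasurableSpace Ω] (P : Measure Ω)
    (KA KB : ℕ) (hKA : 1 ≤ KA) (hKB : 1 ≤ KB) (p : ℝ) (hp : p ∈ Set.Icc (0:ℝ) 1)
    (f : Fin 3 × Fin KA × Fin KB → Ω → ℝ)
    (hmeas : ∀ i, Measurable (f i))
    (hindep : iIndepFun f P)
    (hunif : ∀ i, P.map (f i) = volume.restrict (Set.Icc (0:ℝ) 1))
    (UA UB : Fin KA → Fin KB → Ω → ℝ)
    (hUA : ∀ a b, UA a b = f (0, a, b))
    (hUB : ∀ a b ω, UB a b ω =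
      if f (1, a, b) ω ≤ p then UA a b ω else f (2, a, b) ω) :
    P {ω | (∀ a, UA a ⟨0, by omega⟩ ω ≤ UA ⟨0, by omega⟩ ⟨0, by omega⟩ ω) ∧
           (∀ b, UB ⟨0, by omega⟩ b ω ≤ UB ⟨0, by omega⟩ ⟨0, by omega⟩ ω)}
      = ENNReal.ofReal (p / (KA + KB - 1) + (1 - p) / (KA * KB)) := by
  obtain ⟨m, rfl⟩ : ∃ m, KA = m + 1 := ⟨KA - 1, by omega⟩
  obtain ⟨n, rfl⟩ : ∃ n, KB = n + 1 := ⟨KB - 1, by omega⟩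
  let T : Fin (m + 1) × Fin (n + 1) → Ω → Fin 3 → ℝ := fun ab ω k ↦ f (k, ab) ω
  have hT : iIndepFun T P :=
    (hindep.precomp (g := fun q : (_ : Fin (m + 1) × Fin (n + 1)) × Fin 3 ↦ (q.2, q.1))
      fun q q' h ↦ by simpa [Sigma.ext_iff, and_comm] using h).curry fun _ _ ↦ hmeas _
  have hTlaw (ab) : P.map (T ab) = Measure.pi fun _ ↦ 𝕌 := by
    rw [(hindep.precomp (g := fun k ↦ (k, ab)) fun k k' h ↦ (Prod.ext_iff.1 h).1).map_fun_eq_pi_map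
      fun _ ↦ (hmeas _).aemeasurable]
    simp_rw [hunif]
  let Z := fun o ↦ T (crossIndex o)
  calc P _ = P {ω | (∀ a, Z (some (.inl a)) ω 0 ≤ Z none ω 0) ∧
        ∀ b, mixPayoff p (Z (some (.inr b)) ω) ≤ mixPayoff p (Z none ω)} := by
        congr 1; ext ω
        simp only [mem_ofPred_eq, Z, T, crossIndex, mixPayoff, hUA, hUB, Fin.forall_fin_succ,
          Fin.mk_zero, le_refl, true_and]
        -- the two sides differ only in the `NeZero` proofs inside the `Fin` numerals
        exact Iff.rfl
    _ = _ := measure_forall_le_none_eq_lintegral (fun _ ↦ measurable_pi_lambda _ fun _ ↦ hmeas _)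
          (hT.precomp crossIndex_injective) (fun _ ↦ hTlaw _) (measurable_pi_apply 0)
          (measurable_mixPayoff p)
    _ = _ := by
      rw [(measurePreserving_eval _ 0).map_eq, map_mixPayoff, Fintype.card_fin, Fintype.card_fin,
        lintegral_mixPayoff m n hp]
      congr 2 <;> push_cast <;> ring
end

section
/- In the correlated random game model with parameter p (player A's payoffs i.i.d. uniform on [0,1]; per action profile, independently, U^B = U^A with probability p, else an independent uniform), the expected number of pure Nash equilibria equals p·K^A·K^B/(K^A + K^B - 1) + (1-p). -/
/-!
By linearity of expectation, `E[W]` is the sum over profiles `(a, b)` of the probability that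
`(a, b)` is a pure Nash equilibrium. Fix `(a, b)`. The coin at `(a, b)`, A's payoffs in column `b`,
B's fresh payoff at `(a, b)` and B's payoffs at `(a, b')`, `b' ≠ b`, are `KA + KB + 1` independent
uniforms: they read disjoint blocks of the raw randomness, and each `U^B(a, b')` is a coin-driven
mixture of two uniforms independent of the coin, hence uniform. If the coin shows heads,
`U^B(a, b) = U^A(a, b)` must be the largest of `KA + KB - 1` of these uniforms; if it shows tails,
the column and row conditions concern disjoint families and are independent. The probability
that a given one of `n` i.i.d. uniforms is the largest is `∫₀¹ t ^ (n - 1) dt = 1 / n`, so each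
profile is an equilibrium with probability `p / (KA + KB - 1) + (1 - p) / (KA * KB)`.
-/

open MeasureTheory ProbabilityTheory
open scoped ENNReal

noncomputable abbrev uniform01 : Measure ℝ := volume.restrict (Set.Icc 0 1)

instance : IsProbabilityMeasure uniform01 := ⟨by simp⟩

theorem uniform01_Iic {t : ℝ} (h1 : t ≤ 1) : uniform01 (Set.Iic t) = ENNReal.ofReal t := by
  have : Set.Iic t ∩ Set.Icc 0 1 = Set.Icc 0 t :=
    Set.ext fun x => ⟨fun h => ⟨h.2.1, h.1⟩, fun h => ⟨h.2, h.1, h.2.trans h1⟩⟩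
  rw [Measure.restrict_apply measurableSet_Iic, this, Real.volume_Icc, sub_zero]

theorem uniform01_Ioi {t : ℝ} (h0 : 0 ≤ t) : uniform01 (Set.Ioi t) = ENNReal.ofReal (1 - t) := by
  have : Set.Ioi t ∩ Set.Icc 0 1 = Set.Ioc t 1 :=
    Set.ext fun x => ⟨fun h => ⟨h.1, h.2.2⟩, fun h => ⟨h.1, h0.trans h.1.le, h.2⟩⟩
  rw [Measure.restrict_apply measurableSet_Ioi, this, Real.volume_Ioc]

theorem lintegral_uniform01_Iic_pow (n : ℕ) :
    ∫⁻ t, uniform01 (Set.Iic t) ^ n ∂uniform01 = ((n + 1 : ℕ) : ℝ≥0∞)⁻¹ := by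
  calc ∫⁻ t, uniform01 (Set.Iic t) ^ n ∂uniform01
      = ∫⁻ t in Set.Icc (0 : ℝ) 1, ENNReal.ofReal (t ^ n) :=
        setLIntegral_congr_fun measurableSet_Icc fun t ht => by
          rw [uniform01_Iic ht.2, ENNReal.ofReal_pow ht.1]
    _ = ENNReal.ofReal (∫ t in Set.Icc (0 : ℝ) 1, t ^ n) := by
        rw [ofReal_integral_eq_lintegral_ofReal (continuous_pow n).integrableOn_Icc]
        filter_upwards [ae_restrict_mem measurableSet_Icc] with t ht using pow_nonneg ht.1 n
    _ = ((n + 1 : ℕ) : ℝ≥0∞)⁻¹ := by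
        rw [integral_Icc_eq_integral_Ioc, ← intervalIntegral.integral_of_le zero_le_one,
          integral_pow]
        norm_num [ENNReal.ofReal_inv_of_pos (by positivity : (0 : ℝ) < n + 1)]
        exact_mod_cast ENNReal.ofReal_natCast (n + 1)

theorem measurableSet_setOf_forall_le {J : Type*} [Countable J] (j0 : J) :
    MeasurableSet {x : J → ℝ | ∀ j, x j ≤ x j0} := by
  measurability

theorem pi_uniform01_forall_le {J : Type*} [Fintype J] (j0 : J) :
    Measure.pi (fun _ : J => uniform01) {x | ∀ j, x j ≤ x j0} = (Fintype.card J : ℝ≥0∞)⁻¹ := by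
  classical
  let e := Equiv.optionSubtypeNe j0
  have hS : MeasurableSet {q : ({j // j ≠ j0} → ℝ) × ℝ | ∀ j, q.1 j ≤ q.2} := by
    measurability
  calc Measure.pi (fun _ : J => uniform01) {x | ∀ j, x j ≤ x (e none)}
      = Measure.pi (fun _ : Option {j // j ≠ j0} => uniform01) {z | ∀ o, z o ≤ z none} := by
        rw [← (measurePreserving_piCongrLeft (fun _ : J => uniform01) e).measure_preimage
          (measurableSet_setOf_forall_le _).nullMeasurableSet]
        congr 1
        ext z
        simp only [Set.mem_preimage, Set.mem_ofPred_eq, ← e.forall_congr_right,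
          MeasurableEquiv.coe_piCongrLeft, Equiv.piCongrLeft_apply_apply]
    _ = ((Measure.pi fun _ : {j // j ≠ j0} => uniform01).prod uniform01)
          {q | ∀ j, q.1 j ≤ q.2} := by
        rw [← Measure.pi_map_piOptionEquivProd, Measure.map_apply (MeasurableEquiv.measurable _)
          (measurableSet_setOf_forall_le none)]
        congr 1
        ext q
        simp only [Set.mem_preimage, Set.mem_ofPred_eq, Option.forall, le_refl, true_and]
        rfl
    _ = ∫⁻ t, uniform01 (Set.Iic t) ^ Fintype.card {j // j ≠ j0} ∂uniform01 := by
        rw [Measure.prod_apply_symm hS]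
        congr 1
        ext t
        rw [show (fun y => (y, t)) ⁻¹' {q : ({j // j ≠ j0} → ℝ) × ℝ | ∀ j, q.1 j ≤ q.2}
            = Set.univ.pi fun _ => Set.Iic t from Set.ext fun y => by
              simp only [Set.mem_preimage, Set.mem_ofPred_eq, Set.mem_univ_pi, Set.mem_Iic],
          Measure.pi_pi, Finset.prod_const, Finset.card_univ]
    _ = (Fintype.card J : ℝ≥0∞)⁻¹ := by
        rw [lintegral_uniform01_Iic_pow, ← Fintype.card_option, Fintype.card_congr e]

theorem measure_forall_le_of_iIndepFun {Ω J : Type*} [MeasurableSpace Ω] [Fintype J]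
    {P : Measure Ω} {X : J → Ω → ℝ} (hX : ∀ j, Measurable (X j)) (hind : iIndepFun X P)
    (hlaw : ∀ j, P.map (X j) = uniform01) (j0 : J) :
    P {ω | ∀ j, X j ω ≤ X j0 ω} = (Fintype.card J : ℝ≥0∞)⁻¹ := by
  rw [← pi_uniform01_forall_le j0, ← funext hlaw,
    ← hind.map_fun_eq_pi_map fun j => (hX j).aemeasurable,
    Measure.map_apply (measurable_pi_lambda _ hX) (measurableSet_setOf_forall_le j0)]
  rfl

theorem pi_uniform01_forall_mem_le {J : Type*} [Fintype J] {s : Finset J} {j0 : J}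
    (hj0 : j0 ∈ s) :
    Measure.pi (fun _ : J => uniform01) {x | ∀ j ∈ s, x j ≤ x j0} = (s.card : ℝ≥0∞)⁻¹ := by
  have hind : iIndepFun (fun (j : s) (x : J → ℝ) => x j) (Measure.pi fun _ => uniform01) :=
    (iIndepFun_pi (X := fun _ => id) fun _ => aemeasurable_id).precomp Subtype.val_injective
  simpa using measure_forall_le_of_iIndepFun (fun j => measurable_pi_apply _) hind
    (fun j => (measurePreserving_eval _ j.1).map_eq) ⟨j0, hj0⟩

namespace ProbabilityTheory

theorem iIndepFun.finsetRestrict_of_pairwise_disjoint {Ω ι J β : Type*} [MeasurableSpace Ω]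
    [MeasurableSpace β] {P : Measure Ω} {f : ι → Ω → β} (hf : iIndepFun f P)
    (hmeas : ∀ i, Measurable (f i)) {T : J → Finset ι}
    (hT : Pairwise (Function.onFun Disjoint T)) :
    iIndepFun (fun j ω => (T j).restrict (f · ω)) P := by
  classical
  have := hf.isProbabilityMeasure
  rw [iIndepFun_iff_measure_inter_preimage_eq_mul]
  intro S sets hsets
  induction S using Finset.induction_on with
  | empty => simp
  | insert j S hj ih =>
    have hdisj : Disjoint (T j) (S.biUnion T) :=
      (Finset.disjoint_biUnion_right _ _ _).2 fun k hk => hT fun h => hj (h ▸ hk)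
    let B : Set (S.biUnion T → β) :=
      ⋂ k : S, Finset.restrict₂ (π := fun _ => β) (Finset.subset_biUnion_of_mem T k.2) ⁻¹' sets k
    have hB : MeasurableSet B := .iInter fun k =>
      Finset.measurable_restrict₂ _ (hsets k (Finset.mem_insert_of_mem k.2))
    rw [Finset.set_biInter_insert, Finset.prod_insert hj,
      ← ih fun k hk => hsets k (Finset.mem_insert_of_mem hk)]
    exact (hf.indepFun_finset _ _ hdisj hmeas).meas_inter
      ⟨sets j, hsets j (Finset.mem_insert_self j S), rfl⟩ ⟨B, hB, by ext; simp [B]; rfl⟩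

theorem iIndepFun.comp_of_dependsOn {Ω ι J β γ : Type*} [Fintype ι] [MeasurableSpace Ω]
    [MeasurableSpace β] [MeasurableSpace γ] [Nonempty β] {P : Measure Ω} {f : ι → Ω → β}
    (hf : iIndepFun f P) (hmeas : ∀ i, Measurable (f i)) (o : ι → J) {g : J → (ι → β) → γ}
    (hg : ∀ j, Measurable (g j)) (hdep : ∀ j, DependsOn (g j) {i | o i = j}) :
    iIndepFun (fun j ω => g j (f · ω)) P := by
  classical
  let T j := Finset.univ.filter (o · = j)
  have hT : Pairwise (Function.onFun Disjoint T) := fun j k hjk =>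
    Finset.disjoint_filter.2 fun i _ hj hk => hjk (hj ▸ hk)
  let extend j (y : T j → β) : ι → β := fun i =>
    if hi : i ∈ T j then y ⟨i, hi⟩ else Classical.arbitrary β
  have hextend j : Measurable (extend j) := by
    refine measurable_pi_lambda _ fun i => ?_
    by_cases hi : i ∈ T j
    · simpa [extend, hi] using measurable_pi_apply _
    · simp [extend, hi]
  convert (hf.finsetRestrict_of_pairwise_disjoint hmeas hT).comp (fun j y => g j (extend j y))
    fun j => (hg j).comp (hextend j) using 1
  ext j ω
  exact hdep j fun i hi => by simp [extend, T, hi.symm]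

theorem map_ite_eq_of_indepFun {Ω α β : Type*} [MeasurableSpace Ω] [MeasurableSpace α]
    [MeasurableSpace β] {P : Measure Ω} [IsProbabilityMeasure P] {C : Ω → α} {X Y : Ω → β}
    {ν : Measure β} (hC : Measurable C) (hX : Measurable X) (hY : Measurable Y)
    {q : α → Prop} [DecidablePred q] (hq : MeasurableSet {a | q a})
    (hCX : IndepFun C X P) (hCY : IndepFun C Y P) (hXν : P.map X = ν) (hYν : P.map Y = ν) :
    P.map (fun ω => if q (C ω) then X ω else Y ω) = ν := by
  ext B hB
  have hcoin : MeasurableSet (C ⁻¹' {a | q a}) := hC hq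
  have hsplit : (fun ω => if q (C ω) then X ω else Y ω) ⁻¹' B
      = (C ⁻¹' {a | q a} ∩ X ⁻¹' B) ∪ ((C ⁻¹' {a | q a})ᶜ ∩ Y ⁻¹' B) := by
    ext ω
    by_cases h : q (C ω) <;> simp [h]
  rw [Measure.map_apply (Measurable.ite (p := fun ω => q (C ω)) hcoin hX hY) hB, hsplit,
    measure_union (Disjoint.mono Set.inter_subset_left Set.inter_subset_left disjoint_compl_right)
      (hcoin.compl.inter (hY hB)),
    hCX.meas_inter ⟨_, hq, rfl⟩ ⟨B, hB, rfl⟩,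
    hCY.meas_inter (s := (C ⁻¹' {a | q a})ᶜ) ⟨_, hq.compl, rfl⟩ ⟨B, hB, rfl⟩,
    ← Measure.map_apply hX hB, ← Measure.map_apply hY hB, hXν, hYν, ← add_mul,
    prob_add_prob_compl hcoin, one_mul]

end ProbabilityTheory

open Classical in
theorem integral_card_filter_mem_eq_sum_measureReal {Ω ι : Type*} [MeasurableSpace Ω]
    [Fintype ι] {P : Measure Ω} [IsFiniteMeasure P] {E : ι → Set Ω}
    (hE : ∀ i, MeasurableSet (E i)) :
    ∫ ω, ((Finset.univ.filter fun i => ω ∈ E i).card : ℝ) ∂P = ∑ i, P.real (E i) := by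
  have hcard ω : ((Finset.univ.filter fun i => ω ∈ E i).card : ℝ) = ∑ i, (E i).indicator 1 ω := by
    rw [Finset.natCast_card_filter]
    simp only [Set.indicator_apply, Pi.one_apply]
  simp_rw [hcard]
  rw [integral_finsetSum _ fun i _ => (integrable_const 1).indicator (hE i)]
  exact Finset.sum_congr rfl fun i _ => integral_indicator_one (hE i)

def IsPureNash {A B : Type*} (UA UB : A → B → ℝ) (a : A) (b : B) : Prop :=
  (∀ a', UA a' b ≤ UA a b) ∧ ∀ b', UB a b' ≤ UB a b

namespace CorrelatedGame

variable {KA KB : ℕ} (p : ℝ)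

/-- The raw randomness `x (k, a, b)` is: `k = 0` A's payoff, `k = 1` the coin, `k = 2` B's
fresh payoff. -/
noncomputable def payoffB (x : Fin 3 × Fin KA × Fin KB → ℝ) (a : Fin KA) (b : Fin KB) : ℝ :=
  if x (1, a, b) ≤ p then x (0, a, b) else x (2, a, b)

variable (a : Fin KA) (b : Fin KB)

noncomputable def cellCoord (x : Fin 3 × Fin KA × Fin KB → ℝ) : Option (Fin KA ⊕ Fin KB) → ℝ
  | none => x (1, a, b)
  | some (.inl a') => x (0, a', b)
  | some (.inr b') => if b' = b then x (2, a, b) else payoffB p x a b'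

/-- `cellCoord p a b · o` reads only raw coordinates in the fibre of `o`; these disjoint fibres
make the cell coordinates independent. -/
def cellOwner (i : Fin 3 × Fin KA × Fin KB) : Option (Fin KA ⊕ Fin KB) :=
  if i.2.2 ≠ b then some (.inr i.2.2)
  else if i.1 = 0 then some (.inl i.2.1) else if i.1 = 1 then none else some (.inr b)

noncomputable def cellPoint (x : Fin 3 × Fin KA × Fin KB → ℝ) : (Fin KA ⊕ Fin KB → ℝ) × ℝ :=
  (fun j => cellCoord p a b x (some j), x (1, a, b))

def headsSet : Set (Fin KA ⊕ Fin KB → ℝ) := {y | ∀ j, j ≠ .inr b → y j ≤ y (.inl a)}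

def tailsSet : Set (Fin KA ⊕ Fin KB → ℝ) :=
  {y | (∀ a', y (.inl a') ≤ y (.inl a)) ∧ ∀ b', y (.inr b') ≤ y (.inr b)}

def pneSet : Set ((Fin KA ⊕ Fin KB → ℝ) × ℝ) :=
  headsSet a b ×ˢ Set.Iic p ∪ tailsSet a b ×ˢ Set.Ioi p

theorem isPureNash_iff (x : Fin 3 × Fin KA × Fin KB → ℝ) :
    IsPureNash (fun a' b' => x (0, a', b')) (payoffB p x) a b ↔
      cellPoint p a b x ∈ pneSet p a b := by
  by_cases hc : x (1, a, b) ≤ p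
  · simp only [IsPureNash, cellPoint, pneSet, headsSet, tailsSet, cellCoord, Set.mem_union,
      Set.mem_prod, Set.mem_ofPred_eq, Set.mem_Iic, Set.mem_Ioi, hc, not_lt.2 hc, and_true,
      and_false, or_false, Sum.forall, ne_eq, reduceCtorEq, not_false_eq_true, forall_const,
      Sum.inr.injEq]
    refine and_congr_right' (forall_congr' fun b' => ?_)
    by_cases hb : b' = b <;> simp [hb, payoffB, hc]
  · simp only [IsPureNash, cellPoint, pneSet, headsSet, tailsSet, cellCoord, Set.mem_union,
      Set.mem_prod, Set.mem_ofPred_eq, Set.mem_Iic, Set.mem_Ioi, hc, not_le.1 hc, and_true,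
      and_false, false_or, if_true]
    refine and_congr_right' (forall_congr' fun b' => ?_)
    by_cases hb : b' = b <;> simp [hb, payoffB, hc]

theorem measurable_payoffB : Measurable fun x : Fin 3 × Fin KA × Fin KB → ℝ => payoffB p x a b :=
  Measurable.ite (measurableSet_le (measurable_pi_apply _) measurable_const)
    (measurable_pi_apply _) (measurable_pi_apply _)

theorem measurable_cellCoord (o : Option (Fin KA ⊕ Fin KB)) :
    Measurable fun x => cellCoord p a b x o := by
  rcases o with _ | a' | b'
  · exact measurable_pi_apply _
  · exact measurable_pi_apply _
  · by_cases h : b' = b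
    · simpa [cellCoord, h] using measurable_pi_apply _
    · simpa [cellCoord, h] using measurable_payoffB p a b'

theorem dependsOn_cellCoord (o : Option (Fin KA ⊕ Fin KB)) :
    DependsOn (fun x => cellCoord p a b x o) {i | cellOwner b i = o} := by
  intro x y h
  rcases o with _ | a' | b'
  · exact h (1, a, b) (by simp [cellOwner])
  · exact h (0, a', b) (by simp [cellOwner])
  · by_cases hb : b' = b
    · subst hb
      simp only [cellCoord, if_true]
      exact h (2, a, b') (by simp [cellOwner])
    · simp only [cellCoord, hb, if_false, payoffB]
      rw [h (0, a, b') (by simp [cellOwner, hb]), h (1, a, b') (by simp [cellOwner, hb]),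
        h (2, a, b') (by simp [cellOwner, hb])]

theorem measurable_cellPoint : Measurable (cellPoint (KA := KA) (KB := KB) p a b) :=
  (measurable_pi_lambda _ fun j => measurable_cellCoord p a b (some j)).prodMk
    (measurable_pi_apply _)

theorem measurableSet_headsSet : MeasurableSet (headsSet a b) := by
  unfold headsSet; measurability

theorem measurableSet_tailsSet : MeasurableSet (tailsSet a b) := by
  unfold tailsSet; measurability

theorem measurableSet_pneSet : MeasurableSet (pneSet p a b) :=
  ((measurableSet_headsSet a b).prod measurableSet_Iic).union
    ((measurableSet_tailsSet a b).prod measurableSet_Ioi)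

theorem pi_headsSet :
    Measure.pi (fun _ => uniform01) (headsSet a b) = ((KA + KB - 1 : ℕ) : ℝ≥0∞)⁻¹ := by
  have hmem : Sum.inl a ∈ Finset.univ.erase (Sum.inr b) :=
    Finset.mem_erase.2 ⟨Sum.inl_ne_inr, Finset.mem_univ _⟩
  have hset : headsSet a b = {y | ∀ j ∈ Finset.univ.erase (Sum.inr b), y j ≤ y (.inl a)} := by
    ext y; simp [headsSet]
  rw [hset, pi_uniform01_forall_mem_le hmem, Finset.card_erase_of_mem (Finset.mem_univ _),
    Finset.card_univ, Fintype.card_sum, Fintype.card_fin, Fintype.card_fin]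

theorem pi_tailsSet :
    Measure.pi (fun _ => uniform01) (tailsSet a b) = (KA : ℝ≥0∞)⁻¹ * (KB : ℝ≥0∞)⁻¹ := by
  have hset : tailsSet a b = MeasurableEquiv.sumPiEquivProdPi (fun _ => ℝ) ⁻¹'
      ({y | ∀ a', y a' ≤ y a} ×ˢ {z | ∀ b', z b' ≤ z b}) := rfl
  rw [hset, (measurePreserving_sumPiEquivProdPi _).measure_preimage
      ((measurableSet_setOf_forall_le a).prod (measurableSet_setOf_forall_le b)).nullMeasurableSet,
    Measure.prod_prod, pi_uniform01_forall_le, pi_uniform01_forall_le, Fintype.card_fin,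
    Fintype.card_fin]

theorem prod_pneSet (hp : p ∈ Set.Icc (0 : ℝ) 1) :
    ((Measure.pi fun _ => uniform01).prod uniform01) (pneSet p a b)
      = ENNReal.ofReal p * ((KA + KB - 1 : ℕ) : ℝ≥0∞)⁻¹
        + ENNReal.ofReal (1 - p) * ((KA : ℝ≥0∞)⁻¹ * (KB : ℝ≥0∞)⁻¹) := by
  rw [pneSet, measure_union (Set.disjoint_prod.2 (.inr (Set.Iic_disjoint_Ioi le_rfl)))
      ((measurableSet_tailsSet a b).prod measurableSet_Ioi), Measure.prod_prod, Measure.prod_prod,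
    pi_headsSet, pi_tailsSet, uniform01_Iic hp.2, uniform01_Ioi hp.1, mul_comm, mul_comm (_ * _)]

variable {Ω : Type*} {f : Fin 3 × Fin KA × Fin KB → Ω → ℝ}

theorem setOf_isPureNash_eq_preimage :
    {ω | IsPureNash (fun a' b' => f (0, a', b') ω) (payoffB p (f · ω)) a b}
      = (fun ω => cellPoint p a b (f · ω)) ⁻¹' pneSet p a b :=
  Set.ext fun ω => isPureNash_iff p a b (f · ω)

variable [MeasurableSpace Ω] {P : Measure Ω}

theorem measurable_cellPoint_comp (hmeas : ∀ i, Measurable (f i)) :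
    Measurable fun ω => cellPoint p a b (f · ω) :=
  (measurable_cellPoint p a b).comp (measurable_pi_lambda _ hmeas)

theorem measurableSet_isPureNash (hmeas : ∀ i, Measurable (f i)) :
    MeasurableSet {ω | IsPureNash (fun a' b' => f (0, a', b') ω) (payoffB p (f · ω)) a b} := by
  rw [setOf_isPureNash_eq_preimage]
  exact measurable_cellPoint_comp p a b hmeas (measurableSet_pneSet p a b)

theorem map_cellCoord [IsProbabilityMeasure P] (hmeas : ∀ i, Measurable (f i))
    (hindep : iIndepFun f P) (hunif : ∀ i, P.map (f i) = uniform01)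
    (o : Option (Fin KA ⊕ Fin KB)) :
    P.map (fun ω => cellCoord p a b (f · ω) o) = uniform01 := by
  rcases o with _ | a' | b'
  · exact hunif _
  · exact hunif _
  · by_cases hb : b' = b
    · simpa [cellCoord, hb] using hunif (2, a, b)
    · simp only [cellCoord, hb, if_false, payoffB]
      exact map_ite_eq_of_indepFun (q := (· ≤ p)) (hmeas _) (hmeas _) (hmeas _) measurableSet_Iic
        (hindep.indepFun (by simp)) (hindep.indepFun (by simp)) (hunif _) (hunif _)

theorem map_cellPoint [IsProbabilityMeasure P] (hmeas : ∀ i, Measurable (f i))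
    (hindep : iIndepFun f P) (hunif : ∀ i, P.map (f i) = uniform01) :
    P.map (fun ω => cellPoint p a b (f · ω)) = (Measure.pi fun _ => uniform01).prod uniform01 := by
  have hm o : Measurable fun ω => cellCoord p a b (f · ω) o :=
    (measurable_cellCoord p a b o).comp (measurable_pi_lambda _ hmeas)
  have hind : iIndepFun (fun o ω => cellCoord p a b (f · ω) o) P :=
    hindep.comp_of_dependsOn hmeas (cellOwner b) (measurable_cellCoord p a b)
      (dependsOn_cellCoord p a b)
  have hlaw := hind.map_fun_eq_pi_map fun o => (hm o).aemeasurable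
  simp_rw [map_cellCoord p a b hmeas hindep hunif] at hlaw
  calc P.map (fun ω => cellPoint p a b (f · ω))
      = (P.map fun ω o => cellCoord p a b (f · ω) o).map
          (MeasurableEquiv.piOptionEquivProd fun _ => ℝ) := by
        rw [Measure.map_map (MeasurableEquiv.measurable _) (measurable_pi_lambda _ hm)]
        rfl
    _ = (Measure.pi fun _ => uniform01).prod uniform01 := by
        rw [hlaw, MeasurableEquiv.map_apply_eq_iff_map_symm_apply_eq]
        exact (Measure.pi_map_piOptionEquivProd fun _ => uniform01).symm

theorem measureReal_isPureNash [IsProbabilityMeasure P] (hp : p ∈ Set.Icc (0 : ℝ) 1)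
    (hmeas : ∀ i, Measurable (f i)) (hindep : iIndepFun f P)
    (hunif : ∀ i, P.map (f i) = uniform01) :
    P.real {ω | IsPureNash (fun a' b' => f (0, a', b') ω) (payoffB p (f · ω)) a b}
      = p / (KA + KB - 1) + (1 - p) / (KA * KB) := by
  have hKA : KA ≠ 0 := a.pos.ne'
  have hKB : KB ≠ 0 := b.pos.ne'
  have hKAB : KA + KB - 1 ≠ 0 := by omega
  have hfin (n : ℕ) (hn : n ≠ 0) : (n : ℝ≥0∞)⁻¹ ≠ ⊤ := ENNReal.inv_ne_top.2 (by exact_mod_cast hn)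
  rw [measureReal_def, setOf_isPureNash_eq_preimage,
    ← Measure.map_apply (measurable_cellPoint_comp p a b hmeas) (measurableSet_pneSet p a b),
    map_cellPoint p a b hmeas hindep hunif, prod_pneSet p a b hp,
    ENNReal.toReal_add (ENNReal.mul_ne_top ENNReal.ofReal_ne_top (hfin _ hKAB))
      (ENNReal.mul_ne_top ENNReal.ofReal_ne_top (ENNReal.mul_ne_top (hfin _ hKA) (hfin _ hKB))),
    ENNReal.toReal_mul, ENNReal.toReal_mul, ENNReal.toReal_mul, ENNReal.toReal_inv,
    ENNReal.toReal_inv, ENNReal.toReal_inv, ENNReal.toReal_ofReal hp.1,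
    ENNReal.toReal_ofReal (sub_nonneg.2 hp.2), ENNReal.toReal_natCast, ENNReal.toReal_natCast,
    ENNReal.toReal_natCast, Nat.cast_sub (by omega)]
  push_cast
  ring

end CorrelatedGame

/-- In the correlated random game model with parameter `p` (player A's payoffs i.i.d.
uniform on `[0,1]`; per profile, independently, `UB = UA` with probability `p`, else a
fresh independent uniform), the expected number `E[W]` of pure Nash equilibria equals
`p·KA·KB/(KA + KB - 1) + (1 - p)`. -/
theorem expected_number_PNE
    {Ω : Type*} [MeasurableSpace Ω] (P : Measure Ω) [IsProbabilityMeasure P]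
    (KA KB : ℕ) (hKA : 1 ≤ KA) (hKB : 1 ≤ KB) (p : ℝ) (hp : p ∈ Set.Icc (0:ℝ) 1)
    (f : Fin 3 × Fin KA × Fin KB → Ω → ℝ)
    (hmeas : ∀ i, Measurable (f i))
    (hindep : iIndepFun f P)
    (hunif : ∀ i, P.map (f i) = volume.restrict (Set.Icc (0:ℝ) 1))
    (UA UB : Fin KA → Fin KB → Ω → ℝ)
    (hUA : ∀ a b, UA a b = f (0, a, b))
    (hUB : ∀ a b ω, UB a b ω =
      if f (1, a, b) ω ≤ p then UA a b ω else f (2, a, b) ω)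
    (W : Ω → ℕ)
    (hW : ∀ ω, W ω = (Finset.univ.filter (fun ab : Fin KA × Fin KB =>
      (∀ a, UA a ab.2 ω ≤ UA ab.1 ab.2 ω) ∧
      (∀ b, UB ab.1 b ω ≤ UB ab.1 ab.2 ω))).card) :
    ∫ ω, (W ω : ℝ) ∂P = p * KA * KB / (KA + KB - 1) + (1 - p) := by
  classical
  let E (ab : Fin KA × Fin KB) : Set Ω :=
    {ω | IsPureNash (fun a' b' => f (0, a', b') ω) (CorrelatedGame.payoffB p (f · ω)) ab.1 ab.2}
  have hWE ω : W ω = (Finset.univ.filter fun ab => ω ∈ E ab).card := by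
    rw [hW]
    congr 1
    refine Finset.filter_congr fun ab _ => ?_
    simp only [E, Set.mem_ofPred_eq, IsPureNash, CorrelatedGame.payoffB, hUB, hUA]
  have hKA' : (1 : ℝ) ≤ KA := by exact_mod_cast hKA
  have hKB' : (1 : ℝ) ≤ KB := by exact_mod_cast hKB
  have hKAB : (KA : ℝ) + KB - 1 ≠ 0 := by linarith
  simp_rw [hWE]
  rw [integral_card_filter_mem_eq_sum_measureReal (E := E)
      fun ab => CorrelatedGame.measurableSet_isPureNash p ab.1 ab.2 hmeas,
    Finset.sum_congr rfl fun ab _ =>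
      (CorrelatedGame.measureReal_isPureNash p ab.1 ab.2 hp hmeas hindep hunif :
        P.real (E ab) = _),
    Finset.sum_const, Finset.card_univ, Fintype.card_prod, Fintype.card_fin, Fintype.card_fin,
    nsmul_eq_mul]
  push_cast
  field_simp
end

section
/- Let K ≥ 1 and for t ≥ 0 define r(t) = ⌈(t+1)/2⌉·K + ⌊(t+1)/2⌋·K − ⌊(t+1)/2⌋·⌈(t+1)/2⌉ (the equal-action-set case K^A = K^B = K). Define q_0 = 1/(2K−1), q_1 = (K−1)/(2K−2), and q_t = r(t−1)/r(t) for 2 ≤ t ≤ 2K−1. Then the sequence (q_t) is nondecreasing in t, and q_1 = 1/2. -/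
/-- In the equal-action-set case `KA = KB = K`, with
`r(t) = ⌈(t+1)/2⌉·K + ⌊(t+1)/2⌋·K − ⌊(t+1)/2⌋·⌈(t+1)/2⌉`,
`q 0 = 1/(2K−1)`, `q 1 = (K−1)/(2K−2)` and `q t = r(t−1)/r(t)` for `2 ≤ t ≤ 2K−1`,
the sequence `q` is nondecreasing on `{0,…,2K−1}` and `q 1 = 1/2`. -/
theorem q_monotone (K : ℕ) (hK : 2 ≤ K)
    (r : ℕ → ℝ)
    (hr : ∀ t, r t = ((t + 2) / 2 : ℕ) * K + ((t + 1) / 2 : ℕ) * K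
      - ((t + 1) / 2 : ℕ) * ((t + 2) / 2 : ℕ))
    (q : ℕ → ℝ)
    (hq0 : q 0 = 1 / (2 * K - 1))
    (hq1 : q 1 = (K - 1) / (2 * K - 2))
    (hqt : ∀ t, 2 ≤ t → t ≤ 2 * K - 1 → q t = r (t - 1) / r t) :
    (∀ s t : ℕ, s ≤ t → t ≤ 2 * K - 1 → q s ≤ q t) ∧ q 1 = 1 / 2 := by
  have hK2 : (2 : ℝ) ≤ (K : ℝ) := by exact_mod_cast hK
  -- r at even and odd points
  have hre : ∀ m : ℕ, r (2 * m) = (2 * m + 1) * K - m * (m + 1) := by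
    intro m
    have h1 : ((2 * m + 2) / 2 : ℕ) = m + 1 := by omega
    have h2 : ((2 * m + 1) / 2 : ℕ) = m := by omega
    rw [hr, h1, h2]; push_cast; ring
  have hro : ∀ m : ℕ, r (2 * m + 1) = (2 * m + 2) * K - (m + 1) ^ 2 := by
    intro m
    have h1 : ((2 * m + 1 + 2) / 2 : ℕ) = m + 1 := by omega
    have h2 : ((2 * m + 1 + 1) / 2 : ℕ) = m + 1 := by omega
    rw [hr, h1, h2]; push_cast; ring
  -- positivity of r on the range
  have hpos : ∀ t, t ≤ 2 * K - 1 → 0 < r t := by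
    intro t ht
    rcases Nat.even_or_odd t with ⟨m, hm⟩ | ⟨m, hm⟩
    · have hm' : t = 2 * m := by omega
      subst hm'
      have hmK : (m : ℝ) + 1 ≤ K := by
        have : m + 1 ≤ K := by omega
        exact_mod_cast this
      rw [hre]; nlinarith [Nat.cast_nonneg (α := ℝ) m]
    · subst hm
      have hmK : (m : ℝ) + 1 ≤ K := by
        have : m + 1 ≤ K := by omega
        exact_mod_cast this
      rw [hro]; nlinarith [Nat.cast_nonneg (α := ℝ) m]
  have hq1' : q 1 = 1 / 2 := by
    rw [hq1]
    rw [div_eq_div_iff (by nlinarith) (by norm_num)]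
    ring
  -- one-step monotonicity
  have hstep : ∀ t, t + 1 ≤ 2 * K - 1 → q t ≤ q (t + 1) := by
    intro t ht
    match t with
    | 0 =>
      rw [hq0, hq1']
      rw [div_le_div_iff₀ (by nlinarith) (by norm_num)]
      nlinarith
    | 1 =>
      rw [hq1', hqt 2 (by omega) (by omega)]
      have h1 : r 1 = 2 * K - 1 := by
        have := hro 0; norm_num at this; linarith
      have h2 : r 2 = 3 * K - 2 := by
        have := hre 1; norm_num at this; linarith
      rw [show (2 : ℕ) - 1 = 1 from rfl, h1, h2]
      rw [div_le_div_iff₀ (by norm_num) (by nlinarith)]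
      nlinarith
    | (n + 2) =>
      set t := n + 2 with htdef
      have h2t : 2 ≤ t := by omega
      rw [hqt t h2t (by omega), hqt (t + 1) (by omega) (by omega)]
      have hp1 : 0 < r t := hpos t (by omega)
      have hp2 : 0 < r (t + 1) := hpos (t + 1) ht
      rw [show t + 1 - 1 = t from rfl]
      rw [div_le_div_iff₀ hp1 hp2]
      -- log-concavity: r(t-1)*r(t+1) ≤ r t * r t
      rcases Nat.even_or_odd t with ⟨m, hm⟩ | ⟨m, hm⟩
      · have hm' : t = 2 * m := by omega
        have hm1 : 1 ≤ m := by omega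
        have heq1 : t - 1 = 2 * (m - 1) + 1 := by omega
        have heq2 : t + 1 = 2 * m + 1 := by omega
        rw [heq1, heq2, hm', hro, hro, hre]
        have hc : ((m - 1 : ℕ) : ℝ) = (m : ℝ) - 1 := by
          have : ((m - 1 : ℕ) : ℝ) + 1 = (m : ℝ) := by
            exact_mod_cast Nat.succ_pred_eq_of_pos hm1
          linarith
        rw [hc]
        nlinarith [sq_nonneg ((K : ℝ)), sq_nonneg ((K : ℝ) - (m + 1))]
      · have hm1 : 1 ≤ m := by omega
        have heq1 : t - 1 = 2 * m := by omega
        have heq2 : t + 1 = 2 * (m + 1) := by omega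
        rw [heq1, heq2, hm, hre, hre, hro]
        push_cast
        nlinarith [sq_nonneg ((K : ℝ) - (m + 1))]
  refine ⟨?_, hq1'⟩
  intro s t hst htK
  induction t with
  | zero =>
    have : s = 0 := by omega
    subst this; exact le_rfl
  | succ n ih =>
    rcases Nat.lt_or_ge s (n + 1) with h | h
    · have h1 : q s ≤ q n := ih (by omega) (by omega)
      have h2 : q n ≤ q (n + 1) := hstep n htK
      linarith
    · have : s = n + 1 := by omega
      subst this; exact le_rfl
end

section
/- Let K^A = K^B = K and define q_t as follows: q_0 = 1/(2K−1), q_1 = 1/2, and for 2 ≤ t ≤ 2K−1, q_t = r(t−1)/r(t) where r(t) = (⌈(t+1)/2⌉ + ⌊(t+1)/2⌋)K − ⌊(t+1)/2⌋⌈(t+1)/2⌉. Define P_K(t) = ∏_{j=0}^{t} (1 − q_j). Then for each fixed t ≥ 0, as K → ∞, P_K(t) → 1/(t+1)!. -/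
/-! Since `⌈(t+1)/2⌉ + ⌊(t+1)/2⌋ = t + 1`, the quantity `r K t` is `(t+1)·K` minus a constant
independent of `K`, so `q K t = r K (t-1) / r K t → t/(t+1)` for `t ≥ 2`; also `q K 0 → 0` and
`q K 1 = 1/2`. Hence `1 - q K j → 1/(j+1)` for every `j`, and the product of the first `t + 1`
factors tends to `∏_{j ≤ t} 1/(j+1) = 1/(t+1)!`. -/

open Filter Topology Finset

theorem tendsto_affine_div_affine_natCast (a b c d : ℝ) (hb : b ≠ 0) :
    Tendsto (fun K : ℕ => (a * K - c) / (b * K - d)) atTop (𝓝 (a / b)) := by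
  have hc := tendsto_const_div_atTop_nhds_zero_nat c
  have hd := tendsto_const_div_atTop_nhds_zero_nat d
  have h := (tendsto_const_nhds (x := a)).sub hc |>.div
    ((tendsto_const_nhds (x := b)).sub hd) (by simpa using hb)
  rw [sub_zero, sub_zero] at h
  refine h.congr' ?_
  filter_upwards [eventually_ne_atTop 0] with K hK
  have hK' : (K : ℝ) ≠ 0 := Nat.cast_ne_zero.mpr hK
  rw [Pi.div_apply, ← mul_div_mul_right (a - c / K) _ hK', sub_mul, sub_mul,
    div_mul_cancel₀ _ hK', div_mul_cancel₀ _ hK']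

theorem r_eq_affine (r : ℕ → ℕ → ℝ)
    (hr : ∀ K t, r K t = (((t + 2) / 2 : ℕ) + ((t + 1) / 2 : ℕ)) * K
      - ((t + 1) / 2 : ℕ) * ((t + 2) / 2 : ℕ)) (K t : ℕ) :
    r K t = ((t : ℝ) + 1) * K - (((t + 1) / 2 * ((t + 2) / 2) : ℕ) : ℝ) := by
  have hsum : (((t + 2) / 2 : ℕ) : ℝ) + ((t + 1) / 2 : ℕ) = (t : ℝ) + 1 := by
    exact_mod_cast (by omega : (t + 2) / 2 + (t + 1) / 2 = t + 1)
  rw [hr, hsum, Nat.cast_mul]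

theorem tendsto_ratio_r_succ (r : ℕ → ℕ → ℝ)
    (hr : ∀ K t, r K t = (((t + 2) / 2 : ℕ) + ((t + 1) / 2 : ℕ)) * K
      - ((t + 1) / 2 : ℕ) * ((t + 2) / 2 : ℕ)) (s : ℕ) :
    Tendsto (fun K : ℕ => r K s / r K (s + 1)) atTop
      (𝓝 (((s : ℝ) + 1) / ((s : ℝ) + 1 + 1))) := by
  simp only [r_eq_affine r hr, Nat.cast_add_one]
  exact tendsto_affine_div_affine_natCast _ _ _ _ (by positivity)

theorem tendsto_one_sub_q (r : ℕ → ℕ → ℝ)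
    (hr : ∀ K t, r K t = (((t + 2) / 2 : ℕ) + ((t + 1) / 2 : ℕ)) * K
      - ((t + 1) / 2 : ℕ) * ((t + 2) / 2 : ℕ))
    (q : ℕ → ℕ → ℝ)
    (hq0 : ∀ K, q K 0 = 1 / (2 * K - 1))
    (hq1 : ∀ K, q K 1 = 1 / 2)
    (hqt : ∀ K t, 2 ≤ t → q K t = r K (t - 1) / r K t) (j : ℕ) :
    Tendsto (fun K : ℕ => 1 - q K j) atTop (𝓝 (1 / ((j : ℝ) + 1))) := by
  match j with
  | 0 =>
    have h := tendsto_affine_div_affine_natCast 0 2 (-1) 1 two_ne_zero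
    simpa [hq0] using (tendsto_const_nhds (x := (1 : ℝ))).sub h
  | 1 =>
    simp only [hq1]
    norm_num
  | s + 2 =>
    have h := (tendsto_const_nhds (x := (1 : ℝ))).sub (tendsto_ratio_r_succ r hr (s + 1))
    have hlim : (1 : ℝ) - ((s + 1 : ℕ) + 1) / ((s + 1 : ℕ) + 1 + 1) = 1 / ((s + 2 : ℕ) + 1) := by
      push_cast
      field_simp
      ring
    rw [hlim] at h
    refine h.congr fun K => ?_
    rw [hqt K (s + 2) (by omega)]
    rfl

/-- With `q K 0 = 1/(2K−1)`, `q K 1 = 1/2`, and `q K t = r K (t−1)/r K t` for `t ≥ 2`,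
where `r K t = (⌈(t+1)/2⌉ + ⌊(t+1)/2⌋)·K − ⌊(t+1)/2⌋·⌈(t+1)/2⌉`, the survival
probability `P_K(t) = ∏_{j=0}^{t} (1 − q K j)` satisfies, for each fixed `t`,
`P_K(t) → 1/(t+1)!` as `K → ∞`. -/
theorem survival_prob_tendsto_factorial
    (r : ℕ → ℕ → ℝ)
    (hr : ∀ K t, r K t = (((t + 2) / 2 : ℕ) + ((t + 1) / 2 : ℕ)) * K
      - ((t + 1) / 2 : ℕ) * ((t + 2) / 2 : ℕ))
    (q : ℕ → ℕ → ℝ)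
    (hq0 : ∀ K, q K 0 = 1 / (2 * K - 1))
    (hq1 : ∀ K, q K 1 = 1 / 2)
    (hqt : ∀ K t, 2 ≤ t → q K t = r K (t - 1) / r K t) :
    ∀ t : ℕ, Tendsto (fun K : ℕ => ∏ j ∈ Finset.range (t + 1), (1 - q K j))
      atTop (nhds (1 / (Nat.factorial (t + 1) : ℝ))) := by
  intro t
  have h := tendsto_finsetProd (range (t + 1))
    fun j _ => tendsto_one_sub_q r hr q hq0 hq1 hqt j
  rw [← prod_range_add_one_eq_factorial, Nat.cast_prod, one_div, ← prod_inv_distrib]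
  simpa only [Nat.cast_add_one, one_div] using h
end

section
/- Let X be a bounded nonnegative random variable with expectation μ and distribution function G, and define Φ(x) = ∫_0^x G(t) dt. Then (1/2)·Var(X) = ∫_0^∞ (Φ(t) − max(t − μ, 0)) dt. -/
open MeasureTheory ProbabilityTheory Set

/-! For `t ≥ 0`, Fubini turns `Φ t = ∫₀ᵗ P(X ≤ s) ds` into `E[(t - X)⁺]`, so the integrand is the
Jensen gap `E[(t - X)⁺] - (t - E X)⁺` of the convex function `x ↦ (t - x)⁺`; it vanishes once `t`
bounds `X`. On the remaining interval `(0, C]` a second use of Fubini together with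
`∫₀ᶜ (t - x)⁺ dt = (C - x)² / 2` leaves `E[(C - X)²] / 2 - (C - E X)² / 2 = Var X / 2`. -/

theorem integral_Ioc_max_sub_zero {a b x : ℝ} (hax : a ≤ x) (hxb : x ≤ b) :
    ∫ t in Ioc a b, max (t - x) 0 = (b - x) ^ 2 / 2 := by
  calc ∫ t in Ioc a b, max (t - x) 0 = ∫ t in Ioc x b, max (t - x) 0 :=
        setIntegral_eq_of_subset_of_forall_sdiff_eq_zero measurableSet_Ioc
          (Ioc_subset_Ioc_left hax) fun t ht =>
            max_eq_right (sub_nonpos.2 (not_lt.1 fun hxt => ht.2 ⟨hxt, ht.1.2⟩))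
    _ = ∫ t in Ioc x b, (t - x) :=
        setIntegral_congr_fun measurableSet_Ioc fun t ht => max_eq_left (sub_nonneg.2 ht.1.le)
    _ = (b - x) ^ 2 / 2 := by
        rw [← intervalIntegral.integral_of_le hxb,
          intervalIntegral.integral_comp_sub_right (fun t => t), integral_id]
        ring

theorem volume_real_Ici_inter_Ioc {a t x : ℝ} (hax : a ≤ x) :
    volume.real (Ici x ∩ Ioc a t) = max (t - x) 0 := by
  rw [measureReal_congr ((Ioi_ae_eq_Ici (μ := volume) (a := x)).symm.inter
    (ae_eq_refl (Ioc a t))), inter_comm, Ioc_inter_Ioi, max_eq_right hax, Real.volume_real_Ioc]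

section
variable {Ω : Type*} [MeasurableSpace Ω] {P : Measure Ω} {X : Ω → ℝ}

theorem integral_Ioc_measureReal_le_eq_integral_max_sub [IsFiniteMeasure P] (hX : Measurable X)
    {a : ℝ} (haX : ∀ ω, a ≤ X ω) (t : ℝ) :
    ∫ s in Ioc a t, P.real {ω | X ω ≤ s} = ∫ ω, max (t - X ω) 0 ∂P := by
  have hint : Integrable (Function.uncurry fun s ω => {ω | X ω ≤ s}.indicator (1 : Ω → ℝ) ω)
      ((volume.restrict (Ioc a t)).prod P) := by
    refine Integrable.of_mem_Icc 0 1 ?_ (ae_of_all _ fun p => ?_)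
    · exact (measurable_one.indicator
        (measurableSet_le (hX.comp measurable_snd) measurable_fst)).aemeasurable
    · exact ⟨indicator_nonneg (fun _ _ => zero_le_one) _,
        indicator_le_self' (fun _ _ => zero_le_one) _⟩
  calc ∫ s in Ioc a t, P.real {ω | X ω ≤ s}
      = ∫ s in Ioc a t, ∫ ω, {ω | X ω ≤ s}.indicator 1 ω ∂P := by
        simp only [integral_indicator_one (measurableSet_le hX measurable_const)]
    -- `{ω | X ω ≤ s}.indicator 1 ω` and `(Ici (X ω)).indicator 1 s` agree definitionally.
    _ = ∫ ω, (∫ s in Ioc a t, (Ici (X ω)).indicator 1 s) ∂P := integral_integral_swap hint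
    _ = ∫ ω, max (t - X ω) 0 ∂P := by
        simp only [integral_indicator_one measurableSet_Ici,
          measureReal_restrict_apply measurableSet_Ici, volume_real_Ici_inter_Ioc (haX _)]

theorem integral_max_sub_zero_of_forall_le [IsProbabilityMeasure P] (hXi : Integrable X P)
    {t : ℝ} (hXt : ∀ ω, X ω ≤ t) : ∫ ω, max (t - X ω) 0 ∂P = t - ∫ ω, X ω ∂P := by
  simp only [fun ω => max_eq_left (sub_nonneg.2 (hXt ω))]
  rw [integral_sub (integrable_const t) hXi, integral_const, probReal_univ, one_smul]

noncomputable def jensenGapPosPart (P : Measure Ω) (X : Ω → ℝ) (t : ℝ) : ℝ :=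
  ∫ ω, max (t - X ω) 0 ∂P - max (t - ∫ ω, X ω ∂P) 0

variable [IsProbabilityMeasure P] {a b : ℝ}

theorem jensenGapPosPart_eq_zero_of_forall_le (hXi : Integrable X P) {t : ℝ}
    (hXt : ∀ ω, X ω ≤ t) : jensenGapPosPart P X t = 0 := by
  have h := integral_max_sub_zero_of_forall_le hXi hXt
  have hmean : 0 ≤ t - ∫ ω, X ω ∂P := h ▸ integral_nonneg fun ω => le_max_right _ _
  rw [jensenGapPosPart, h, max_eq_left hmean, sub_self]

theorem integral_Ioc_jensenGapPosPart (hX : Measurable X) (hab : ∀ ω, X ω ∈ Icc a b) :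
    ∫ t in Ioc a b, jensenGapPosPart P X t = variance X P / 2 := by
  set μ := ∫ ω, X ω ∂P
  have hXi : Integrable X P := .of_mem_Icc a b hX.aemeasurable (ae_of_all _ hab)
  have hμ : μ ∈ Icc a b := (convex_Icc a b).integral_mem isClosed_Icc (ae_of_all _ hab) hXi
  have hdev : ∀ ω, |X ω - μ| ≤ b - a := fun ω =>
    abs_sub_le_of_le_of_le (hab ω).1 (hab ω).2 hμ.1 hμ.2
  have hint : Integrable (Function.uncurry fun t ω => max (t - X ω) 0 - max (t - μ) 0)
      ((volume.restrict (Ioc a b)).prod P) := by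
    refine .of_bound (by fun_prop) (b - a) (ae_of_all _ fun p => ?_)
    refine (abs_max_sub_max_le_abs _ _ _).trans ?_
    rw [sub_sub_sub_cancel_left, abs_sub_comm]
    exact hdev p.2
  calc ∫ t in Ioc a b, jensenGapPosPart P X t
      = ∫ t in Ioc a b, ∫ ω, (max (t - X ω) 0 - max (t - μ) 0) ∂P :=
        setIntegral_congr_fun measurableSet_Ioc fun t _ => by
          have hmax : Integrable (fun ω => max (t - X ω) 0) P :=
            ((integrable_const t).sub hXi).pos_part
          rw [jensenGapPosPart, integral_sub hmax (integrable_const _), integral_const,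
            probReal_univ, one_smul]
    _ = ∫ ω, (∫ t in Ioc a b, (max (t - X ω) 0 - max (t - μ) 0)) ∂P :=
        integral_integral_swap hint
    _ = ∫ ω, ((b - X ω) ^ 2 / 2 - (b - μ) ^ 2 / 2) ∂P := by
        refine integral_congr_ae (ae_of_all _ fun ω => ?_)
        dsimp only
        rw [integral_sub (by fun_prop : Continuous fun t => max (t - X ω) 0).integrableOn_Ioc
          (by fun_prop : Continuous fun t => max (t - μ) 0).integrableOn_Ioc,
          integral_Ioc_max_sub_zero (hab ω).1 (hab ω).2, integral_Ioc_max_sub_zero hμ.1 hμ.2]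
    _ = ∫ ω, ((X ω - μ) ^ 2 / 2 - (b - μ) * (X ω - μ)) ∂P := by
        congr with ω; ring
    _ = variance X P / 2 := by
        have hsq : Integrable (fun ω => (X ω - μ) ^ 2) P :=
          .of_mem_Icc 0 ((b - a) ^ 2) (by fun_prop) (ae_of_all _ fun ω =>
            ⟨sq_nonneg _, sq_le_sq' (abs_le.1 (hdev ω)).1 (abs_le.1 (hdev ω)).2⟩)
        have hcentered : Integrable (fun ω => X ω - μ) P := hXi.sub (integrable_const μ)
        rw [integral_sub (hsq.div_const 2) (hcentered.const_mul _),
          integral_div, integral_const_mul, integral_sub hXi (integrable_const μ),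
          integral_const, probReal_univ, one_smul, sub_self, mul_zero, sub_zero,
          variance_eq_integral hX.aemeasurable]

theorem integral_Ioi_jensenGapPosPart (hX : Measurable X) (hab : ∀ ω, X ω ∈ Icc a b) :
    ∫ t in Ioi a, jensenGapPosPart P X t = variance X P / 2 := by
  have hXi : Integrable X P := .of_mem_Icc a b hX.aemeasurable (ae_of_all _ hab)
  rw [setIntegral_eq_of_subset_of_forall_sdiff_eq_zero measurableSet_Ioi Ioc_subset_Ioi_self
    fun t ht => jensenGapPosPart_eq_zero_of_forall_le hXi fun ω =>
      (hab ω).2.trans (not_le.1 fun hbt => ht.2 ⟨ht.1, hbt⟩).le]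
  exact integral_Ioc_jensenGapPosPart hX hab

end

/-- For a bounded nonnegative random variable `X` with mean `μ`, distribution function
`G` and `Φ(x) = ∫_0^x G(t) dt`, one has
`(1/2)·Var(X) = ∫_0^∞ (Φ(t) − max (t − μ) 0) dt`. -/
theorem half_variance_integral_formula
    {Ω : Type*} [MeasurableSpace Ω] (P : Measure Ω) [IsProbabilityMeasure P]
    (X : Ω → ℝ) (hX : Measurable X) (C : ℝ)
    (hbdd : ∀ ω, X ω ∈ Set.Icc 0 C)
    (μ : ℝ) (hμ : μ = ∫ ω, X ω ∂P)
    (G : ℝ → ℝ) (hG : ∀ t, G t = (P {ω | X ω ≤ t}).toReal)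
    (Φ : ℝ → ℝ) (hΦ : ∀ x, Φ x = ∫ t in (0:ℝ)..x, G t) :
    (1 / 2) * variance X P = ∫ t in Set.Ioi (0:ℝ), (Φ t - max (t - μ) 0) := by
  subst hμ
  have hΦ_eq : ∀ t, 0 ≤ t → Φ t = ∫ ω, max (t - X ω) 0 ∂P := fun t ht => by
    simp only [hΦ, hG, intervalIntegral.integral_of_le ht]
    exact integral_Ioc_measureReal_le_eq_integral_max_sub hX (fun ω => (hbdd ω).1) t
  calc (1 / 2) * variance X P = ∫ t in Ioi 0, jensenGapPosPart P X t := by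
        rw [integral_Ioi_jensenGapPosPart hX hbdd]; ring
    _ = ∫ t in Ioi 0, (Φ t - max (t - ∫ ω, X ω ∂P) 0) :=
        setIntegral_congr_fun measurableSet_Ioi fun t ht => by
          rw [jensenGapPosPart, hΦ_eq t (le_of_lt ht)]
end
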